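/- arXiv:2207.02673 — 9 statements merged into one kernel-verified Lean document; each statement's English description precedes it below -/
import Mathlib

section
/- Let p be analytic on the unit disc with p(0)=1, Re(p(z)) > 0, p(z) = 1 + q·z + ... . If f and g are analytic with f(z) = z + f₁z² + ..., g(z) = z + g₁z² + ..., Re(f/g) > 0 and Re(g/(zp)) > 1/2 on the punctured disc, then |g₁| ≤ 3 and |f₁| ≤ 5. -/
/-!
Divide out the zeros at the origin: `F = f / z` and `G = g / z` are holomorphic on the disc with
`F 0 = G 0 = 1`, `F' 0 = f₁`, `G' 0 = g₁`. The quotients `G / p` and `F / G` equal `1` at `0` and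
have real part `> 1/2`, resp. `> 0`, so Carathéodory's bound `‖h' 0‖ ≤ 2 (Re h 0 - m)` for
`Re h > m` gives `‖g₁ - q‖ ≤ 1` and `‖f₁ - g₁‖ ≤ 2`; together with `‖q‖ ≤ 2` the triangle
inequality yields `‖g₁‖ ≤ 3` and `‖f₁‖ ≤ 5`.
-/

open Complex Metric Set Filter Topology ComplexConjugate

theorem norm_sub_le_norm_add_conj {w a : ℂ} (hw : 0 ≤ w.re) (ha : 0 ≤ a.re) :
    ‖w - a‖ ≤ ‖w + conj a‖ := by
  have key : ‖w + conj a‖ ^ 2 = ‖w - a‖ ^ 2 + 4 * w.re * a.re := by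
    simp only [Complex.sq_norm, normSq_apply, add_re, add_im, sub_re, sub_im, conj_re, conj_im]
    ring
  exact (sq_le_sq₀ (norm_nonneg _) (norm_nonneg _)).mp (by nlinarith [mul_nonneg hw ha])

theorem norm_deriv_le_of_re_pos {F : ℂ → ℂ} {c : ℂ} {R : ℝ} (hR : 0 < R)
    (hd : DifferentiableOn ℂ F (ball c R)) (hre : ∀ z ∈ ball c R, 0 < (F z).re) :
    ‖deriv F c‖ ≤ 2 * (F c).re / R := by
  set a := F c
  have ha : 0 < a.re := hre c (mem_ball_self hR)
  have hne : ∀ z ∈ ball c R, F z + conj a ≠ 0 := fun z hz h => by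
    have := congrArg re h
    simp only [add_re, conj_re, zero_re] at this
    linarith [hre z hz]
  -- the Cayley transform `φ` maps the ball into the unit disc; apply the Schwarz lemma to it
  set φ : ℂ → ℂ := fun z => (F z - a) / (F z + conj a)
  have hφd : DifferentiableOn ℂ φ (ball c R) := (hd.sub_const a).fun_div (hd.add_const _) hne
  have hφ : MapsTo φ (ball c R) (closedBall (φ c) 1) := fun z hz => by
    simp only [φ, a, sub_self, zero_div, mem_closedBall, dist_zero_right, norm_div]
    exact div_le_one_of_le₀ (norm_sub_le_norm_add_conj (hre z hz).le ha.le) (norm_nonneg _)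
  have hφ' : deriv φ c = deriv F c / (2 * a.re) := by
    have hF := (hd.differentiableAt (ball_mem_nhds c hR)).hasDerivAt
    rw [((hF.sub_const a).fun_div (hF.add_const (conj a)) (hne c (mem_ball_self hR))).deriv,
      sub_self, zero_mul, sub_zero, sq, mul_div_mul_right _ _ (hne c (mem_ball_self hR)),
      add_conj, ofReal_mul, ofReal_ofNat]
  have := norm_deriv_le_div_of_mapsTo_ball hφd hφ hR
  rw [hφ', norm_div, norm_mul, Complex.norm_two, norm_real, Real.norm_of_nonneg ha.le,
    div_le_div_iff₀ (by positivity) hR] at this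
  rw [le_div_iff₀ hR]
  linarith

theorem norm_sub_le_of_re_div_gt {u v : ℂ → ℂ} {u' v' c : ℂ} {R m : ℝ} (hR : 0 < R)
    (hu : DifferentiableOn ℂ u (ball c R)) (hv : DifferentiableOn ℂ v (ball c R))
    (hv0 : ∀ z ∈ ball c R, v z ≠ 0) (hu' : HasDerivAt u u' c) (hv' : HasDerivAt v v' c)
    (huc : u c = 1) (hvc : v c = 1) (hre : ∀ z ∈ ball c R, m < (u z / v z).re) :
    ‖u' - v'‖ ≤ 2 * (1 - m) / R := by
  have hderiv : HasDerivAt (fun z => u z / v z - m) (u' - v') c := by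
    simpa [huc, hvc] using (hu'.fun_div hv' (by simp [hvc])).sub_const (m : ℂ)
  have := norm_deriv_le_of_re_pos (F := fun z => u z / v z - m) hR
    ((hu.fun_div hv hv0).sub_const _) fun z hz => by simpa using hre z hz
  simpa [hderiv.deriv, huc, hvc] using this

theorem hasDerivAt_dslope_same_of_differentiableOn {E : Type*} [NormedAddCommGroup E]
    [NormedSpace ℂ E] [CompleteSpace E] {f : ℂ → E} {s : Set ℂ} {c : ℂ}
    (hf : DifferentiableOn ℂ f s) (hs : IsOpen s) (hc : c ∈ s) :
    HasDerivAt (dslope f c) ((2 : ℂ)⁻¹ • iteratedDeriv 2 f c) c := by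
  set D := dslope f c
  have hD : DifferentiableOn ℂ D s := (differentiableOn_dslope (hs.mem_nhds hc)).mpr hf
  -- `f z = f c + (z - c) • D z`, so `f' = D + (z - c) • D'` and `f''(c) = 2 D'(c)`
  have hf' : deriv f =ᶠ[𝓝 c] fun z => D z + (z - c) • deriv D z := by
    filter_upwards [hs.mem_nhds hc] with z hz
    have hfD : f = fun w => f c + (w - c) • D w := by
      funext w; rw [sub_smul_dslope, add_sub_cancel]
    have := (((hasDerivAt_id z).sub_const c).smul
      (hD.differentiableAt (hs.mem_nhds hz)).hasDerivAt).const_add (f c)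
    rw [hfD]
    exact this.deriv.trans (by simp [add_comm])
  have hD'c : DifferentiableAt ℂ (deriv D) c :=
    ((hD.analyticAt (hs.mem_nhds hc)).deriv).differentiableAt
  have h2 : HasDerivAt (deriv f) ((2 : ℂ) • deriv D c) c := by
    have := (hD.differentiableAt (hs.mem_nhds hc)).hasDerivAt.add
      (((hasDerivAt_id c).sub_const c).smul hD'c.hasDerivAt)
    simp only [id, sub_self, zero_smul, one_smul, zero_add] at this
    rw [two_smul]
    exact this.congr_of_eventuallyEq hf'
  rw [iteratedDeriv_succ, iteratedDeriv_one, h2.deriv, smul_smul, inv_mul_cancel₀ two_ne_zero,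
    one_smul]
  exact (hD.differentiableAt (hs.mem_nhds hc)).hasDerivAt

theorem exists_eq_div_of_map_zero {f : ℂ → ℂ} {s : Set ℂ} (hf : DifferentiableOn ℂ f s)
    (hs : IsOpen s) (h0 : (0 : ℂ) ∈ s) (hf0 : f 0 = 0) :
    ∃ F : ℂ → ℂ, DifferentiableOn ℂ F s ∧ F 0 = deriv f 0 ∧
      HasDerivAt F (2⁻¹ * iteratedDeriv 2 f 0) 0 ∧ ∀ z ≠ 0, F z = f z / z := by
  refine ⟨dslope f 0, (differentiableOn_dslope (hs.mem_nhds h0)).mpr hf, dslope_same f 0,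
    hasDerivAt_dslope_same_of_differentiableOn hf hs h0, fun z hz => ?_⟩
  rw [dslope_of_ne _ hz, slope_def_field, hf0, sub_zero, sub_zero]

theorem stmt_1 (p f g : ℂ → ℂ) (q f₁ g₁ : ℂ)
    (hp : AnalyticOn ℂ p (ball (0:ℂ) 1)) (hp0 : p 0 = 1)
    (hpre : ∀ z ∈ ball (0:ℂ) 1, 0 < (p z).re)
    (hpq : deriv p 0 = q)
    (hf : AnalyticOn ℂ f (ball (0:ℂ) 1)) (hf0 : f 0 = 0)
    (hf1 : deriv f 0 = 1) (hf2 : iteratedDeriv 2 f 0 = 2 * f₁)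
    (hg : AnalyticOn ℂ g (ball (0:ℂ) 1)) (hg0 : g 0 = 0)
    (hg1 : deriv g 0 = 1) (hg2 : iteratedDeriv 2 g 0 = 2 * g₁)
    (hfg : ∀ z ∈ ball (0:ℂ) 1, z ≠ 0 → 0 < (f z / g z).re)
    (hgp : ∀ z ∈ ball (0:ℂ) 1, z ≠ 0 → 1/2 < (g z / (z * p z)).re) :
    ‖g₁‖ ≤ 3 ∧ ‖f₁‖ ≤ 5 := by
  have h0 : (0 : ℂ) ∈ ball (0 : ℂ) 1 := mem_ball_self one_pos
  have hpd := hp.differentiableOn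
  have hp' : HasDerivAt p q 0 := hpq ▸ (hpd.differentiableAt (ball_mem_nhds 0 one_pos)).hasDerivAt
  have hq : ‖q‖ ≤ 2 := by simpa [← hpq, hp0] using norm_deriv_le_of_re_pos one_pos hpd hpre
  obtain ⟨F, hFd, hF0, hF', hF⟩ := exists_eq_div_of_map_zero hf.differentiableOn isOpen_ball h0 hf0
  obtain ⟨G, hGd, hG0, hG', hG⟩ := exists_eq_div_of_map_zero hg.differentiableOn isOpen_ball h0 hg0
  rw [hf1] at hF0
  rw [hg1] at hG0
  rw [hf2, inv_mul_cancel_left₀ two_ne_zero] at hF'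
  rw [hg2, inv_mul_cancel_left₀ two_ne_zero] at hG'
  have hGp : ∀ z ∈ ball (0 : ℂ) 1, 1 / 2 < (G z / p z).re := fun z hz => by
    rcases eq_or_ne z 0 with rfl | hz0
    · norm_num [hG0, hp0]
    · simpa only [hG z hz0, div_div] using hgp z hz hz0
  have hFG : ∀ z ∈ ball (0 : ℂ) 1, 0 < (F z / G z).re := fun z hz => by
    rcases eq_or_ne z 0 with rfl | hz0
    · norm_num [hF0, hG0]
    · simpa only [hF z hz0, hG z hz0, div_div_div_cancel_right₀ hz0] using hfg z hz hz0
  have hpne : ∀ z ∈ ball (0 : ℂ) 1, p z ≠ 0 := fun z hz h => by simpa [h] using hpre z hz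
  have hGne : ∀ z ∈ ball (0 : ℂ) 1, G z ≠ 0 := fun z hz h => by
    have := hGp z hz
    norm_num [h] at this
  have hg₁ : ‖g₁ - q‖ ≤ 1 := by
    have := norm_sub_le_of_re_div_gt one_pos hGd hpd hpne hG' hp' hG0 hp0 hGp
    norm_num at this
    exact this
  have hf₁ : ‖f₁ - g₁‖ ≤ 2 := by
    simpa using norm_sub_le_of_re_div_gt one_pos hFd hGd hGne hF' hG' hF0 hG0 hFG
  have hg₃ : ‖g₁‖ ≤ 3 := by linarith [norm_sub_norm_le g₁ q]
  exact ⟨hg₃, by linarith [norm_sub_norm_le f₁ g₁]⟩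
end

section
/- Let p be analytic on the unit disc with p(0)=1, Re(p(z)) > 0, p(z) = 1 + q·z + ... . If f is analytic with f(z) = z + f₁z² + ... and Re(f(z)/(z·p(z))) > 0 on the punctured disc, then |f₁| ≤ 4. -/
open Complex Metric Filter Topology

/-!
Write `f z / z = p z * g z`. Then `g 0 = 1` and `Re g > 0` on the disc, so comparing
coefficients gives `f₁ = p'(0) + g'(0)`. Each term has norm at most `2`: for `h` with
`h 0 = 1` and `Re h > 0`, the Cayley transform `(h - 1) / (h + 1)` maps the disc into itself
and fixes `0`, so the Schwarz lemma bounds its derivative `h'(0) / 2` by `1`.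
-/

theorem add_one_ne_zero_of_re_pos {w : ℂ} (hw : 0 < w.re) : w + 1 ≠ 0 := fun h => by
  have := congrArg re h
  simp only [add_re, one_re, zero_re] at this
  linarith

theorem norm_sub_one_div_add_one_lt_one {w : ℂ} (hw : 0 < w.re) :
    ‖(w - 1) / (w + 1)‖ < 1 := by
  rw [norm_div, div_lt_one (norm_pos_iff.2 (add_one_ne_zero_of_re_pos hw)),
    ← sq_lt_sq₀ (norm_nonneg _) (norm_nonneg _), ← normSq_eq_norm_sq, ← normSq_eq_norm_sq,
    normSq_apply, normSq_apply]
  simp only [sub_re, add_re, sub_im, add_im, one_re, one_im]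
  nlinarith

theorem norm_deriv_le_two_of_re_pos {h : ℂ → ℂ} (hd : DifferentiableOn ℂ h (ball 0 1))
    (h0 : h 0 = 1) (hre : ∀ z ∈ ball (0 : ℂ) 1, 0 < (h z).re) :
    ‖deriv h 0‖ ≤ 2 := by
  set w : ℂ → ℂ := fun z => (h z - 1) / (h z + 1)
  have hwd : DifferentiableOn ℂ w (ball 0 1) :=
    (hd.sub_const 1).div (hd.add_const 1) fun z hz => add_one_ne_zero_of_re_pos (hre z hz)
  have hmaps : Set.MapsTo w (ball 0 1) (closedBall (w 0) 1) := fun z hz => by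
    simpa [w, h0] using (norm_sub_one_div_add_one_lt_one (hre z hz)).le
  have hw' : HasDerivAt w (deriv h 0 / 2) 0 := by
    have hh := (hd.differentiableAt (ball_mem_nhds 0 one_pos)).hasDerivAt
    refine ((hh.sub_const 1).div (hh.add_const 1) (by norm_num [h0])).congr_deriv ?_
    rw [h0]; ring
  have := norm_deriv_le_div_of_mapsTo_ball hwd hmaps one_pos
  rw [hw'.deriv, norm_div] at this
  norm_num at this
  linarith

theorem iteratedDeriv_two_eq_two_mul_deriv_dslope {𝕜 : Type*} [NontriviallyNormedField 𝕜]
    {f : 𝕜 → 𝕜} {a : 𝕜} (hf : ContDiffAt 𝕜 2 (dslope f a) a) :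
    iteratedDeriv 2 f a = 2 * deriv (dslope f a) a := by
  have hfa : f = fun z => f a + ((fun z => z - a) * dslope f a) z := by
    ext z
    rw [Pi.mul_apply, ← smul_eq_mul, sub_smul_dslope, add_sub_cancel]
  conv_lhs => rw [hfa]
  rw [iteratedDeriv_const_add two_pos, iteratedDeriv_mul (n := 2) (by fun_prop) hf]
  simp [Finset.sum_range_succ, iteratedDeriv_succ]

theorem stmt_2 (p f : ℂ → ℂ) (q f₁ : ℂ)
    (hp : AnalyticOn ℂ p (ball (0:ℂ) 1)) (hp0 : p 0 = 1)
    (hpre : ∀ z ∈ ball (0:ℂ) 1, 0 < (p z).re)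
    (hpq : deriv p 0 = q)
    (hf : AnalyticOn ℂ f (ball (0:ℂ) 1)) (hf0 : f 0 = 0)
    (hf1 : deriv f 0 = 1) (hf2 : iteratedDeriv 2 f 0 = 2 * f₁)
    (hfp : ∀ z ∈ ball (0:ℂ) 1, z ≠ 0 → 0 < (f z / (z * p z)).re) :
    ‖f₁‖ ≤ 4 := by
  have hball : ball (0 : ℂ) 1 ∈ 𝓝 0 := ball_mem_nhds 0 one_pos
  have hpd := hp.differentiableOn
  have hFd : DifferentiableOn ℂ (dslope f 0) (ball 0 1) :=
    (differentiableOn_dslope hball).2 hf.differentiableOn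
  have hpne : ∀ z ∈ ball (0 : ℂ) 1, p z ≠ 0 := fun z hz h => by simpa [h] using hpre z hz
  set g : ℂ → ℂ := fun z => dslope f 0 z / p z
  have hgd : DifferentiableOn ℂ g (ball 0 1) := hFd.div hpd hpne
  have hg0 : g 0 = 1 := by simp [g, hf1, hp0]
  have hgre : ∀ z ∈ ball (0 : ℂ) 1, 0 < (g z).re := by
    intro z hz
    rcases eq_or_ne z 0 with rfl | hz0
    · simp [hg0]
    · simpa [g, dslope_of_ne _ hz0, slope_def_field, hf0, div_div] using hfp z hz hz0
  have hFpg : dslope f 0 =ᶠ[𝓝 0] fun z => p z * g z :=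
    eventually_of_mem hball fun z hz => (mul_div_cancel₀ _ (hpne z hz)).symm
  have hf₁ : f₁ = q + deriv g 0 := by
    have h2 := iteratedDeriv_two_eq_two_mul_deriv_dslope (hFd.analyticAt hball).contDiffAt
    rw [hf2, hFpg.deriv_eq, deriv_fun_mul (hpd.differentiableAt hball)
      (hgd.differentiableAt hball), hpq, hp0, hg0] at h2
    linear_combination h2 / 2
  calc ‖f₁‖ ≤ ‖q‖ + ‖deriv g 0‖ := hf₁ ▸ norm_add_le _ _
    _ ≤ 2 + 2 := add_le_add (hpq ▸ norm_deriv_le_two_of_re_pos hpd hp0 hpre)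
        (norm_deriv_le_two_of_re_pos hgd hg0 hgre)
    _ = 4 := by norm_num
end

section
/- Let n be real with |n| ≤ 1. Define k(z) = (1 - n z)/(1 - z²) on the unit disc. Then Re(k(z)) > 1/2 for all z in the unit disc. -/
/-!
Since `1 - n z = (1 + n)/2 · (1 - z) + (1 - n)/2 · (1 + z)`, the function `k` is the convex
combination `(1 + n)/2 · 1/(1 + z) + (1 - n)/2 · 1/(1 - z)`. Both `1/(1 ± z)` map the unit disc
into the half-plane `Re w > 1/2`, which is convex.
-/

open Complex Metric

namespace Complex

-- `Re (1/w) > 1/2` is `|w|² < 2 Re w`, i.e. `|w - 1| < 1`.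
theorem half_lt_re_inv_one_add {z : ℂ} (hz : ‖z‖ < 1) : 1 / 2 < (1 + z)⁻¹.re := by
  have hz2 : normSq z < 1 := by
    rw [← Complex.sq_norm]
    nlinarith [norm_nonneg z]
  have hpos : 0 < normSq (1 + z) := by
    rw [normSq_pos]
    intro h
    rw [add_eq_zero_iff_eq_neg'] at h
    simp [h] at hz
  rw [inv_re, lt_div_iff₀ hpos]
  simp only [normSq_apply, add_re, add_im, one_re, one_im] at hz2 ⊢
  nlinarith

theorem half_lt_re_inv_one_sub {z : ℂ} (hz : ‖z‖ < 1) : 1 / 2 < (1 - z)⁻¹.re := by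
  simpa [sub_eq_add_neg] using half_lt_re_inv_one_add (z := -z) (by simpa using hz)

theorem div_one_sub_sq_eq_convex_comb (n : ℝ) {z : ℂ} (h₁ : 1 + z ≠ 0) (h₂ : 1 - z ≠ 0) :
    (1 - n * z) / (1 - z ^ 2) =
      (((1 + n) / 2 : ℝ) : ℂ) * (1 + z)⁻¹ + (((1 - n) / 2 : ℝ) : ℂ) * (1 - z)⁻¹ := by
  have h : 1 - z ^ 2 = (1 + z) * (1 - z) := by ring
  rw [h]
  field_simp
  push_cast
  ring

end Complex

theorem stmt_5 (n : ℝ) (hn : |n| ≤ 1) :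
    ∀ z : ℂ, ‖z‖ < 1 →
      1/2 < (((1 : ℂ) - (n:ℂ) * z) / (1 - z ^ 2)).re := by
  intro z hz
  obtain ⟨hn₁, hn₂⟩ := abs_le.mp hn
  have hz₁ : 1 + z ≠ 0 := fun h => by
    simp [add_eq_zero_iff_eq_neg'.mp h] at hz
  have hz₂ : 1 - z ≠ 0 := fun h => by
    simp [(sub_eq_zero.mp h).symm] at hz
  rw [div_one_sub_sq_eq_convex_comb n hz₁ hz₂]
  have hconv := convex_halfSpace_re_gt (1 / 2) (half_lt_re_inv_one_add hz)
    (half_lt_re_inv_one_sub hz) (by linarith : (0 : ℝ) ≤ (1 + n) / 2)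
    (by linarith : (0 : ℝ) ≤ (1 - n) / 2) (by ring)
  simpa only [Set.mem_ofPred_eq, real_smul] using hconv
end

section
/- For every constant C with 2√2/3 < C < √2, the open disc {w ∈ ℂ : |w - C| < √2 - C} is contained in the lemniscate region {w ∈ ℂ : |w² - 1| < 1}. -/
/-!
Writing `w = x + iy`, one has `|w² - 1|² = (|w|² + 1)² - 4x²`, so `w` lies in the lemniscate region
iff `(|w|² + 1)² < 1 + 4x²`. On the disc, `|w|² + 1 < 3 - 2√2 C + 2Cx` and `2C - √2 < x < √2`.
The quadratic `1 + 4x² - (3 - 2√2 C + 2Cx)²` vanishes at the tangency point `x = √2` and equals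
`4 (√2 - x) g(x)` with `g` affine, `g(2C - √2) = C (√2 C - 1)² ≥ 0` and `g(√2) = 3C - 2√2`.
The latter is nonnegative exactly when `C ≥ 2√2/3`, i.e. when the radius is at most the radius
of curvature `√2/3` of the lemniscate at its vertex.
-/

open Complex

namespace Complex

theorem normSq_sq_sub_one (w : ℂ) : normSq (w ^ 2 - 1) = (normSq w + 1) ^ 2 - 4 * w.re ^ 2 := by
  simp only [normSq_apply, pow_two, sub_re, sub_im, mul_re, mul_im, one_re, one_im]
  ring

theorem norm_sq_sub_one_lt_one_iff (w : ℂ) :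
    ‖w ^ 2 - 1‖ < 1 ↔ (normSq w + 1) ^ 2 < 1 + 4 * w.re ^ 2 := by
  rw [← sq_lt_one_iff₀ (norm_nonneg _), ← normSq_eq_norm_sq, normSq_sq_sub_one]
  constructor <;> intro h <;> linarith

theorem normSq_sub_ofReal (w : ℂ) (c : ℝ) :
    normSq (w - c) = normSq w - 2 * c * w.re + c ^ 2 := by
  simp only [normSq_apply, sub_re, sub_im, ofReal_re, ofReal_im]
  ring

end Complex

theorem lemniscate_quadratic_le {C x : ℝ} (hC : 2 * √2 / 3 ≤ C) (hCs : C < √2)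
    (hxl : 2 * C - √2 ≤ x) (hxu : x ≤ √2) :
    (3 - 2 * √2 * C + 2 * C * x) ^ 2 ≤ 1 + 4 * x ^ 2 := by
  set s := √2
  have hs : s ^ 2 = 2 := Real.sq_sqrt zero_le_two
  have hC0 : 0 ≤ C := le_trans (by positivity) hC
  set g := (s * C - 1) * (s - C) + (C ^ 2 - 1) * x
  have hfactor : 1 + 4 * x ^ 2 - (3 - 2 * s * C + 2 * C * x) ^ 2 = 4 * (s - x) * g := by
    linear_combination (4 + 4 * C * x - 4 * s * C) * hs
  -- `g` is affine, so it interpolates its values at the ends of the interval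
  have hinterp : 2 * (s - C) * g
      = (x - (2 * C - s)) * (3 * C - 2 * s) + (s - x) * (C * (s * C - 1) ^ 2) := by
    linear_combination (C ^ 3 * x + 2 * s * C - 2 * C ^ 2 - s * C ^ 3) * hs
  have hg : 0 ≤ g := by
    refine nonneg_of_mul_nonneg_right ?_ (by linarith : (0 : ℝ) < 2 * (s - C))
    rw [hinterp]
    have : 0 ≤ 3 * C - 2 * s := by linarith
    have : 0 ≤ x - (2 * C - s) := by linarith
    have : 0 ≤ s - x := by linarith
    positivity
  linarith [mul_nonneg (by linarith : (0 : ℝ) ≤ 4 * (s - x)) hg]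

theorem stmt_6_general (C : ℝ) (h1 : 2 * Real.sqrt 2 / 3 < C) :
    ∀ w : ℂ, ‖w - (C:ℂ)‖ < Real.sqrt 2 - C →
      ‖w ^ 2 - 1‖ < 1 := by
  intro w hw
  have hCs : C < √2 := by linarith [norm_nonneg (w - C)]
  have hre : |w.re - C| < √2 - C := by
    simpa using (abs_re_le_norm (w - C)).trans_lt hw
  obtain ⟨hxl, hxu⟩ := abs_lt.mp hre
  have hdisc : normSq w + 1 < 3 - 2 * √2 * C + 2 * C * w.re := by
    have hsq := pow_lt_pow_left₀ hw (norm_nonneg _) two_ne_zero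
    rw [← normSq_eq_norm_sq, normSq_sub_ofReal] at hsq
    nlinarith [Real.sq_sqrt (zero_le_two : (0 : ℝ) ≤ 2)]
  rw [norm_sq_sub_one_lt_one_iff]
  calc (normSq w + 1) ^ 2 < (3 - 2 * √2 * C + 2 * C * w.re) ^ 2 :=
        pow_lt_pow_left₀ hdisc (by linarith [normSq_nonneg w]) two_ne_zero
    _ ≤ 1 + 4 * w.re ^ 2 := lemniscate_quadratic_le h1.le hCs (by linarith) (by linarith)

theorem stmt_6 (C : ℝ) (h1 : 2 * Real.sqrt 2 / 3 < C) (h2 : C < Real.sqrt 2) :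
    ∀ w : ℂ, ‖w - (C:ℂ)‖ < Real.sqrt 2 - C →
      ‖w ^ 2 - 1‖ < 1 :=
  stmt_6_general C h1
end

section
/- For every constant C with 1/e ≤ C ≤ (e + 1/e)/2, the open disc {w ∈ ℂ : |w - C| < C - 1/e} is contained in the region {w ∈ ℂ : w ≠ 0 and |log w| < 1}, where log denotes the principal branch of the complex logarithm. -/
open Complex Real

/-!
Write `w = exp z` with `z = log w = s + iθ`, `|θ| ≤ π`. The disc of centre `C` lies in the disc of
centre `cosh 1` and radius `sinh 1`, and because `cosh² - sinh² = 1`, membership in the latter reads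
`cosh s < cosh 1 * cos θ`. On the other hand `t ↦ cosh √(s² + t²) * cos t` decreases on `[0, π/2]`
(its derivative has the sign of `(sinh R / R) * t cos t - cosh R * sin t`, and `sinh R ≤ R cosh R`,
`t cos t ≤ sin t`), so `cosh |z| * cos θ ≤ cosh s`, which forces `|z| < 1`.
-/

namespace Real

lemma sinh_le_mul_cosh {x : ℝ} (hx : 0 ≤ x) : sinh x ≤ x * cosh x := by
  have hderiv (t : ℝ) : HasDerivAt (fun t ↦ t * cosh t - sinh t) (t * sinh t) t := by
    refine (((hasDerivAt_id t).mul (hasDerivAt_cosh t)).sub (hasDerivAt_sinh t)).congr_deriv ?_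
    simp
  have hmono : MonotoneOn (fun t ↦ t * cosh t - sinh t) (Set.Ici 0) := by
    refine monotoneOn_of_deriv_nonneg (convex_Ici 0) (by fun_prop)
      (fun t _ ↦ (hderiv t).differentiableAt.differentiableWithinAt) fun t ht ↦ ?_
    rw [interior_Ici, Set.mem_Ioi] at ht
    rw [(hderiv t).deriv]
    exact mul_nonneg ht.le (sinh_nonneg_iff.mpr ht.le)
  simpa using hmono Set.self_mem_Ici hx hx

lemma mul_cos_le_sin {x : ℝ} (h0 : 0 ≤ x) (h1 : x ≤ π / 2) : x * cos x ≤ sin x := by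
  rcases h1.lt_or_eq with h1 | rfl
  · have hcos : 0 < cos x := cos_pos_of_mem_Ioo ⟨by linarith [pi_pos], h1⟩
    have := le_tan h0 h1
    rwa [tan_eq_sin_div_cos, le_div_iff₀ hcos] at this
  · simp

lemma antitoneOn_cosh_sqrt_mul_cos (s : ℝ) :
    AntitoneOn (fun t ↦ cosh √(s ^ 2 + t ^ 2) * cos t) (Set.Icc 0 (π / 2)) := by
  have hderiv {t : ℝ} (ht : 0 < t) : HasDerivAt (fun t ↦ cosh √(s ^ 2 + t ^ 2) * cos t)
      (sinh √(s ^ 2 + t ^ 2) / √(s ^ 2 + t ^ 2) * (t * cos t)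
        - cosh √(s ^ 2 + t ^ 2) * sin t) t := by
    have hR : √(s ^ 2 + t ^ 2) ≠ 0 := by positivity
    have hsq : HasDerivAt (fun t ↦ s ^ 2 + t ^ 2) (2 * t) t := by
      simpa using (hasDerivAt_pow 2 t).const_add (s ^ 2)
    refine (((hsq.sqrt (by positivity)).cosh).mul (hasDerivAt_cos t)).congr_deriv ?_
    field_simp
    ring
  refine antitoneOn_of_deriv_nonpos (convex_Icc 0 (π / 2)) (by fun_prop)
    (fun t ht ↦ ?_) fun t ht ↦ ?_
  · rw [interior_Icc] at ht
    exact (hderiv ht.1).differentiableAt.differentiableWithinAt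
  rw [interior_Icc] at ht
  obtain ⟨ht0, htπ⟩ := ht
  set R := √(s ^ 2 + t ^ 2)
  have hR : 0 < R := by positivity
  rw [(hderiv ht0).deriv, sub_nonpos]
  have hslope : sinh R / R ≤ cosh R := by
    rw [div_le_iff₀ hR, mul_comm]
    exact sinh_le_mul_cosh hR.le
  exact mul_le_mul hslope (mul_cos_le_sin ht0.le htπ.le)
    (mul_nonneg ht0.le (cos_nonneg_of_mem_Icc ⟨by linarith, htπ.le⟩)) (cosh_pos R).le

lemma cosh_sqrt_mul_cos_le_cosh (s : ℝ) {t : ℝ} (ht : |t| ≤ π / 2) :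
    cosh √(s ^ 2 + t ^ 2) * cos t ≤ cosh s := by
  have := antitoneOn_cosh_sqrt_mul_cos s ⟨le_rfl, by linarith [pi_pos]⟩
    ⟨abs_nonneg t, ht⟩ (abs_nonneg t)
  simpa [sqrt_sq_eq_abs] using this

end Real

namespace Complex

lemma norm_lt_of_cosh_re_lt_mul_cos_im {z : ℂ} {ρ : ℝ} (hρ : 0 ≤ ρ) (him : |z.im| ≤ π)
    (h : Real.cosh z.re < Real.cosh ρ * Real.cos z.im) : ‖z‖ < ρ := by
  have hcos : 0 < Real.cos z.im :=
    pos_of_mul_pos_right ((Real.cosh_pos _).trans h) (Real.cosh_pos ρ).le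
  have him' : |z.im| ≤ π / 2 := by
    by_contra! hlt
    have := Real.cos_nonpos_of_pi_div_two_le_of_le hlt.le (by linarith [pi_pos])
    rw [Real.cos_abs] at this
    linarith
  by_contra! hz
  have hnorm : ‖z‖ = √(z.re ^ 2 + z.im ^ 2) := by
    rw [norm_def, normSq_apply]; ring_nf
  have hcosh : Real.cosh ρ ≤ Real.cosh ‖z‖ := by
    rwa [Real.cosh_le_cosh, abs_norm, abs_of_nonneg hρ]
  have := Real.cosh_sqrt_mul_cos_le_cosh z.re him'
  rw [← hnorm] at this
  nlinarith [mul_le_mul_of_nonneg_right hcosh hcos.le]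

lemma sq_norm_exp_add_one_lt_iff {z : ℂ} {c : ℝ} :
    ‖exp z‖ ^ 2 + 1 < 2 * c * (exp z).re ↔ Real.cosh z.re < c * Real.cos z.im := by
  have hexp : ‖exp z‖ ^ 2 + 1 = 2 * Real.exp z.re * Real.cosh z.re := by
    rw [norm_exp, Real.cosh_eq, Real.exp_neg]
    field_simp
  rw [hexp, exp_re, show 2 * c * (Real.exp z.re * Real.cos z.im)
    = 2 * Real.exp z.re * (c * Real.cos z.im) by ring]
  exact mul_lt_mul_iff_right₀ (by positivity)

lemma sq_norm_add_one_lt_of_mem_ball {a : ℝ} {w : ℂ}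
    (hw : w ∈ Metric.ball (Real.cosh a : ℂ) (Real.sinh a)) :
    ‖w‖ ^ 2 + 1 < 2 * Real.cosh a * w.re := by
  rw [mem_ball_iff_norm] at hw
  have hsq := sq_lt_sq' (by linarith [norm_nonneg (w - Real.cosh a)]) hw
  rw [Complex.sq_norm, normSq_apply] at hsq
  simp only [sub_re, ofReal_re, sub_im, ofReal_im, sub_zero] at hsq
  rw [Complex.sq_norm, normSq_apply]
  nlinarith [Real.cosh_sq a]

end Complex

theorem stmt_8_general (C : ℝ)
    (h2 : C ≤ (Real.exp 1 + 1 / Real.exp 1) / 2) :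
    ∀ w : ℂ, ‖w - (C:ℂ)‖ < C - 1 / Real.exp 1 →
      w ≠ 0 ∧ ‖Complex.log w‖ < 1 := by
  intro w hw
  have hcosh : Real.cosh 1 = (Real.exp 1 + 1 / Real.exp 1) / 2 := by
    rw [Real.cosh_eq, Real.exp_neg, one_div]
  have hsinh : Real.sinh 1 = Real.cosh 1 - 1 / Real.exp 1 := by
    rw [Real.sinh_eq, hcosh, Real.exp_neg]
    ring
  have hball : w ∈ Metric.ball (Real.cosh 1 : ℂ) (Real.sinh 1) := by
    refine Metric.ball_subset_ball' ?_ (mem_ball_iff_norm.mpr hw)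
    rw [dist_eq_norm, ← ofReal_sub, norm_real, Real.norm_of_nonpos (by linarith)]
    linarith
  have hdisc := sq_norm_add_one_lt_of_mem_ball hball
  have hw0 : w ≠ 0 := by
    rintro rfl
    norm_num at hdisc
  refine ⟨hw0, norm_lt_of_cosh_re_lt_mul_cos_im zero_le_one ?_ ?_⟩
  · rw [log_im]
    exact abs_arg_le_pi w
  · rwa [← sq_norm_exp_add_one_lt_iff, exp_log hw0]

theorem stmt_8 (C : ℝ) (h1 : 1 / Real.exp 1 ≤ C)
    (h2 : C ≤ (Real.exp 1 + 1 / Real.exp 1) / 2) :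
    ∀ w : ℂ, ‖w - (C:ℂ)‖ < C - 1 / Real.exp 1 →
      w ≠ 0 ∧ ‖Complex.log w‖ < 1 :=
  stmt_8_general C h2
end

section
/- For every constant C with √2 - 1 < C ≤ √2 + 1, the open disc {w ∈ ℂ : |w - C| < 1 - |√2 - C|} is contained in the lune region {w ∈ ℂ : |w² - 1| < 2|w|}. -/
/-!
Writing `a = ‖w - 1‖`, `b = ‖w + 1‖`, the parallelogram law `a² + b² = 2‖w‖² + 2` turns
`‖w² - 1‖² - 4‖w‖² = a²b² - 4‖w‖²` into `(a² - 2)(b² - 2)`, so the lune is the set where exactly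
one of `a`, `b` is below `√2`. On the disc of radius `1` about `√2` one has `a < √2 < b`, and the
given disc lies inside it because its radius is `1` minus the distance of its centre from `√2`.
-/

open Complex

lemma norm_sub_one_sq_add_norm_add_one_sq (w : ℂ) :
    ‖w - 1‖ ^ 2 + ‖w + 1‖ ^ 2 = 2 * ‖w‖ ^ 2 + 2 := by
  have h := parallelogram_law_with_norm ℝ w 1
  rw [norm_one] at h
  linear_combination h

lemma norm_sq_sub_one_sq_sub_four_mul_norm_sq (w : ℂ) :
    ‖w ^ 2 - 1‖ ^ 2 - 4 * ‖w‖ ^ 2 = (‖w - 1‖ ^ 2 - 2) * (‖w + 1‖ ^ 2 - 2) := by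
  rw [show w ^ 2 - 1 = (w - 1) * (w + 1) by ring, norm_mul]
  linear_combination 2 * norm_sub_one_sq_add_norm_add_one_sq w

lemma norm_sq_sub_one_lt_two_mul_norm_iff (w : ℂ) :
    ‖w ^ 2 - 1‖ < 2 * ‖w‖ ↔ (‖w - 1‖ ^ 2 - 2) * (‖w + 1‖ ^ 2 - 2) < 0 := by
  rw [← norm_sq_sub_one_sq_sub_four_mul_norm_sq, sub_neg,
    ← sq_lt_sq₀ (norm_nonneg _) (by positivity), mul_pow]
  norm_num

lemma norm_sq_sub_one_lt_two_mul_norm_of_norm_sub_one_lt {w : ℂ} (hsub : ‖w - 1‖ < √2)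
    (hadd : √2 < ‖w + 1‖) : ‖w ^ 2 - 1‖ < 2 * ‖w‖ := by
  have hsq : √2 ^ 2 = 2 := Real.sq_sqrt zero_le_two
  rw [norm_sq_sub_one_lt_two_mul_norm_iff]
  refine mul_neg_of_neg_of_pos ?_ ?_
  · nlinarith [norm_nonneg (w - 1)]
  · nlinarith [Real.sqrt_nonneg 2]

lemma norm_sq_sub_one_lt_two_mul_norm_of_mem_ball {w : ℂ} (hw : w ∈ Metric.ball (√2 : ℂ) 1) :
    ‖w ^ 2 - 1‖ < 2 * ‖w‖ := by
  rw [Metric.mem_ball] at hw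
  have hdist_one : dist (√2 : ℂ) 1 = √2 - 1 := by
    rw [← ofReal_one, isometry_ofReal.dist_eq, Real.dist_eq,
      abs_of_pos (by linarith [Real.one_lt_sqrt_two])]
  have hdist_neg_one : dist (√2 : ℂ) (-1) = √2 + 1 := by
    rw [← ofReal_one, ← ofReal_neg, isometry_ofReal.dist_eq, Real.dist_eq, sub_neg_eq_add,
      abs_of_pos (by positivity)]
  apply norm_sq_sub_one_lt_two_mul_norm_of_norm_sub_one_lt
  · rw [← dist_eq]
    linarith [dist_triangle w √2 1]
  · rw [← sub_neg_eq_add, ← dist_eq]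
    linarith [dist_triangle_left (√2 : ℂ) (-1) w]

theorem stmt_9_general (C : ℝ) :
    ∀ w : ℂ, ‖w - (C:ℂ)‖ < 1 - |Real.sqrt 2 - C| →
      ‖w ^ 2 - 1‖ < 2 * ‖w‖ := by
  intro w hw
  apply norm_sq_sub_one_lt_two_mul_norm_of_mem_ball
  refine Metric.ball_subset_ball' (x := (C : ℂ)) ?_ (mem_ball_iff_norm.mpr hw)
  rw [dist_comm, isometry_ofReal.dist_eq, Real.dist_eq]
  linarith

theorem stmt_9 (C : ℝ) (h1 : Real.sqrt 2 - 1 < C) (h2 : C ≤ Real.sqrt 2 + 1) :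
    ∀ w : ℂ, ‖w - (C:ℂ)‖ < 1 - |Real.sqrt 2 - C| →
      ‖w ^ 2 - 1‖ < 2 * ‖w‖ :=
  stmt_9_general C
end

section
/- For every constant C with 2/(1+e) < C < 2e/(1+e), the open disc {w ∈ ℂ : |w - C| < (e-1)/(e+1) - |C - 1|} is contained in the region {w ∈ ℂ : w ≠ 0, w ≠ 2, and |log(w/(2 - w))| < 1}, where log is the principal branch. -/
open Complex Real

/-!
By the triangle inequality the disc lies in `|w - 1| < (e - 1)/(e + 1) = tanh (1/2)`.
Writing `w = 1 + u`, we have `w / (2 - w) = (1 + u)/(1 - u)`, and since both `1 ± u` lie in the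
right half-plane, `Log ((1 + u)/(1 - u)) = Log (1 + u) - Log (1 - u) = 2 artanh u`. The Taylor
series of `2 artanh` has nonnegative coefficients, so `|2 artanh u| ≤ 2 artanh |u| < 1`.
-/

namespace Complex

lemma log_div_of_re_pos {x y : ℂ} (hx : 0 < x.re) (hy : 0 < y.re) :
    log (x / y) = log x - log y := by
  have hx0 : x ≠ 0 := by rintro rfl; simp at hx
  have hy0 : y ≠ 0 := by rintro rfl; simp at hy
  obtain ⟨hx₁, hx₂⟩ := abs_lt.1 (abs_arg_lt_pi_div_two_iff.2 (Or.inl hx))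
  obtain ⟨hy₁, hy₂⟩ := abs_lt.1 (abs_arg_lt_pi_div_two_iff.2 (Or.inl hy))
  have hy_arg : y.arg ≠ π := by linarith [pi_pos]
  rw [div_eq_mul_inv, log_mul hx0 (inv_ne_zero hy0), log_inv _ hy_arg, sub_eq_add_neg]
  rw [arg_inv, if_neg hy_arg]
  constructor <;> linarith [pi_pos]

lemma hasSum_log_one_add_sub_log_one_sub {z : ℂ} (hz : ‖z‖ < 1) :
    HasSum (fun n : ℕ ↦ ((((-1 : ℝ) ^ (n + 1) + 1) / n : ℝ) : ℂ) * z ^ n)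
      (log (1 + z) - log (1 - z)) := by
  convert (hasSum_taylorSeries_log hz).add (hasSum_taylorSeries_neg_log hz) using 1
  · funext n; push_cast; ring
  · ring

lemma norm_log_one_add_sub_log_one_sub_le {z : ℂ} (hz : ‖z‖ < 1) :
    ‖log (1 + z) - log (1 - z)‖ ≤ Real.log (1 + ‖z‖) - Real.log (1 - ‖z‖) := by
  have hreal : HasSum (fun n : ℕ ↦ ((-1 : ℝ) ^ (n + 1) + 1) / n * ‖z‖ ^ n)
      (Real.log (1 + ‖z‖) - Real.log (1 - ‖z‖)) := by
    rw [← hasSum_ofReal]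
    convert hasSum_log_one_add_sub_log_one_sub (z := ‖z‖) (by simpa using hz) using 1
    · funext n; push_cast; ring
    · rw [ofReal_sub, ofReal_log (by linarith [norm_nonneg z]), ofReal_log (by linarith)]
      push_cast; rfl
  refine (hasSum_log_one_add_sub_log_one_sub hz).norm_le_of_bounded hreal fun n ↦ ?_
  have hcoeff : 0 ≤ ((-1 : ℝ) ^ (n + 1) + 1) / n := by
    rcases neg_one_pow_eq_or ℝ (n + 1) with h | h <;> rw [h] <;> positivity
  rw [norm_mul, norm_real, norm_pow, Real.norm_of_nonneg hcoeff]

end Complex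

lemma Real.log_one_add_sub_log_one_sub_lt {s t : ℝ} (hs : -1 < s)
    (hst : s < (exp t - 1) / (exp t + 1)) :
    Real.log (1 + s) - Real.log (1 - s) < t := by
  have het : 0 < exp t + 1 := by positivity
  rw [lt_div_iff₀ het] at hst
  have hs1 : 0 < 1 - s := by nlinarith [exp_pos t]
  rw [← Real.log_div (by linarith) hs1.ne', Real.log_lt_iff_lt_exp (div_pos (by linarith) hs1),
    div_lt_iff₀ hs1]
  linarith

theorem stmt_10_general (C : ℝ) :
    ∀ w : ℂ,
      ‖w - (C:ℂ)‖ < (Real.exp 1 - 1) / (Real.exp 1 + 1) - |C - 1| →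
      w ≠ 0 ∧ w ≠ 2 ∧ ‖Complex.log (w / (2 - w))‖ < 1 := by
  intro w hw
  have hu : ‖w - 1‖ < (Real.exp 1 - 1) / (Real.exp 1 + 1) :=
    calc ‖w - 1‖ ≤ ‖w - C‖ + ‖(C : ℂ) - 1‖ := norm_sub_le_norm_sub_add_norm_sub _ _ _
      _ = ‖w - C‖ + |C - 1| := by rw [← ofReal_one, ← ofReal_sub, norm_real, Real.norm_eq_abs]
      _ < _ := by linarith
  have hu1 : ‖w - 1‖ < 1 := hu.trans <| (div_lt_one (by positivity)).2 (by linarith)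
  obtain ⟨hre₁, hre₂⟩ := abs_lt.1 ((abs_re_le_norm (w - 1)).trans_lt hu1)
  have hw : 0 < w.re := by simp only [sub_re, one_re] at hre₁; linarith
  have h2w : 0 < (2 - w).re := by simp only [sub_re, one_re] at hre₂ ⊢; norm_num; linarith
  refine ⟨fun h ↦ by simp [h] at hw, fun h ↦ by simp [h] at h2w, ?_⟩
  calc ‖Complex.log (w / (2 - w))‖ = ‖Complex.log (1 + (w - 1)) - Complex.log (1 - (w - 1))‖ := by
        rw [log_div_of_re_pos hw h2w]; ring_nf
    _ ≤ Real.log (1 + ‖w - 1‖) - Real.log (1 - ‖w - 1‖) := norm_log_one_add_sub_log_one_sub_le hu1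
    _ < 1 := Real.log_one_add_sub_log_one_sub_lt (by linarith [norm_nonneg (w - 1)]) hu

theorem stmt_10 (C : ℝ) (h1 : 2 / (1 + Real.exp 1) < C)
    (h2 : C < 2 * Real.exp 1 / (1 + Real.exp 1)) :
    ∀ w : ℂ,
      ‖w - (C:ℂ)‖ < (Real.exp 1 - 1) / (Real.exp 1 + 1) - |C - 1| →
      w ≠ 0 ∧ w ≠ 2 ∧ ‖Complex.log (w / (2 - w))‖ < 1 :=
  stmt_10_general C
end

section
/- Let l, q ∈ [0,2], α ∈ [0,1), and let ρ ∈ (0,1) be the smallest root of x₃(r) = α-1 + α(l+q)r + (7+α+(1+α)lq)r² + 6(l+q)r³ + (9+3lq-α(1+lq))r⁴ - (α-2)(l+q)r⁵ + (1-α)r⁶. Then for all 0 < r ≤ ρ, 1 - (r/(1-r²))·((lr²+4r+l)/(r²+lr+1) + (qr²+4r+q)/(r²+qr+1)) ≥ α. -/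
theorem stmt_14 (l q α ρ : ℝ) (hl : l ∈ Set.Icc (0:ℝ) 2)
    (hq : q ∈ Set.Icc (0:ℝ) 2) (hα : α ∈ Set.Ico (0:ℝ) 1)
    (x₃ : ℝ → ℝ)
    (hx₃ : x₃ = fun r =>
      α - 1 + α*(l+q)*r + (7 + α + (1+α)*l*q)*r^2 + 6*(l+q)*r^3
      + (9 + 3*l*q - α*(1+l*q))*r^4 - (α-2)*(l+q)*r^5 + (1-α)*r^6)
    (hρ : ρ ∈ Set.Ioo (0:ℝ) 1) (hroot : x₃ ρ = 0)
    (hsmall : ∀ r, 0 < r → r < ρ → x₃ r ≠ 0) :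
    ∀ r, 0 < r → r ≤ ρ →
      α ≤ 1 - (r/(1-r^2)) * ((l*r^2+4*r+l)/(r^2+l*r+1) + (q*r^2+4*r+q)/(r^2+q*r+1)) := by
  intro r hr hrρ
  obtain ⟨hl0, hl2⟩ := hl
  obtain ⟨hq0, hq2⟩ := hq
  obtain ⟨hα0, hα1⟩ := hα
  obtain ⟨hρ0, hρ1⟩ := hρ
  have hr1 : r < 1 := lt_of_le_of_lt hrρ hρ1
  -- Step 1: x₃ r ≤ 0
  have hcont : Continuous x₃ := by subst hx₃; continuity
  have hx0 : x₃ 0 < 0 := by subst hx₃; simp; linarith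
  have hle : x₃ r ≤ 0 := by
    by_contra h
    push_neg at h
    have hne : x₃ r ≠ 0 := ne_of_gt h
    have hrlt : r < ρ := lt_of_le_of_ne hrρ (by rintro rfl; exact hne hroot)
    -- IVT on [0, r]
    have := intermediate_value_Icc (le_of_lt hr) hcont.continuousOn
      (show (0:ℝ) ∈ Set.Icc (x₃ 0) (x₃ r) from ⟨le_of_lt hx0, le_of_lt h⟩)
    obtain ⟨c, ⟨hc0, hcr⟩, hcz⟩ := this
    have hc0' : 0 < c := by
      rcases lt_or_eq_of_le hc0 with h' | h'
      · exact h'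
      · exact absurd (h' ▸ hcz) (ne_of_lt hx0)
    have hcρ : c < ρ := lt_of_le_of_lt hcr hrlt
    exact hsmall c hc0' hcρ hcz
  -- Step 2: algebra
  have hD1 : 0 < r^2 + l*r + 1 := by nlinarith
  have hD2 : 0 < r^2 + q*r + 1 := by nlinarith
  have hD3 : 0 < 1 - r^2 := by nlinarith
  have key : 1 - (r/(1-r^2)) * ((l*r^2+4*r+l)/(r^2+l*r+1) + (q*r^2+4*r+q)/(r^2+q*r+1)) - α
      = -x₃ r / ((1-r^2) * (r^2+l*r+1) * (r^2+q*r+1)) := by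
    subst hx₃
    field_simp
    ring
  have hpos : 0 < (1-r^2) * (r^2+l*r+1) * (r^2+q*r+1) := by positivity
  have : 0 ≤ -x₃ r / ((1-r^2) * (r^2+l*r+1) * (r^2+q*r+1)) :=
    div_nonneg (by linarith) (le_of_lt hpos)
  linarith [key ▸ this]
end

section
/- Fix m ∈ [0,2], n ∈ [0,1], q ∈ [0,2], and α ∈ [0,1). Define x₂(r) = -4/(1-r²) - 1/(1+nr) + (2+2nr)/(1+2nr+r²) + (2+mr)/(1+r(m+r)) + (2+qr)/(1+r(q+r)) - α. Then x₂(0) = 1 - α > 0 and x₂(1/3) < 0, so x₂ has a root in (0, 1/3). -/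
theorem stmt_18 (m n q α : ℝ) (hm : m ∈ Set.Icc (0:ℝ) 2) (hn : n ∈ Set.Icc (0:ℝ) 1)
    (hq : q ∈ Set.Icc (0:ℝ) 2) (hα : α ∈ Set.Ico (0:ℝ) 1) :
    let x₂ : ℝ → ℝ := fun r =>
      -4/(1-r^2) - 1/(1+n*r) + (2+2*n*r)/(1+2*n*r+r^2)
      + (2+m*r)/(1+r*(m+r)) + (2+q*r)/(1+r*(q+r)) - α
    x₂ 0 = 1 - α ∧ 0 < x₂ 0 ∧ x₂ (1/3) < 0 ∧ ∃ r ∈ Set.Ioo (0:ℝ) (1/3), x₂ r = 0 := by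
  obtain ⟨hm0, hm2⟩ := hm
  obtain ⟨hn0, hn1⟩ := hn
  obtain ⟨hq0, hq2⟩ := hq
  obtain ⟨hα0, hα1⟩ := hα
  intro x₂
  have h0 : x₂ 0 = 1 - α := by
    show -4/(1-(0:ℝ)^2) - 1/(1+n*0) + (2+2*n*0)/(1+2*n*0+0^2)
      + (2+m*0)/(1+0*(m+0)) + (2+q*0)/(1+0*(q+0)) - α = 1 - α
    norm_num
  have h0pos : 0 < x₂ 0 := by rw [h0]; linarith
  have h13 : x₂ (1/3) < 0 := by
    show -4/(1-(1/3:ℝ)^2) - 1/(1+n*(1/3)) + (2+2*n*(1/3))/(1+2*n*(1/3)+(1/3)^2)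
      + (2+m*(1/3))/(1+(1/3)*(m+(1/3))) + (2+q*(1/3))/(1+(1/3)*(q+(1/3))) - α < 0
    have ha : (0:ℝ) < 1 + n*(1/3) := by linarith
    have hb : (0:ℝ) < 1 + 2*n*(1/3) + (1/3)^2 := by nlinarith
    have hc : (0:ℝ) < 1 + (1/3)*(m+(1/3)) := by nlinarith
    have hd : (0:ℝ) < 1 + (1/3)*(q+(1/3)) := by nlinarith
    have e1 : -4/(1-(1/3:ℝ)^2) = -9/2 := by norm_num
    have e2 : (2+2*n*(1/3))/(1+2*n*(1/3)+(1/3)^2) - 1/(1+n*(1/3)) ≤ 4/5 := by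
      rw [div_sub_div _ _ hb.ne' ha.ne', div_le_iff₀ (mul_pos hb ha)]
      nlinarith [sq_nonneg n, mul_nonneg hn0 hn0]
    have e3 : (2+m*(1/3))/(1+(1/3)*(m+(1/3))) ≤ 9/5 := by
      rw [div_le_iff₀ hc]; nlinarith
    have e4 : (2+q*(1/3))/(1+(1/3)*(q+(1/3))) ≤ 9/5 := by
      rw [div_le_iff₀ hd]; nlinarith
    linarith
  refine ⟨h0, h0pos, h13, ?_⟩
  have hcont : ContinuousOn x₂ (Set.Icc 0 (1/3)) := by
    have c1 : ∀ r ∈ Set.Icc (0:ℝ) (1/3), 1 - r^2 ≠ 0 := by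
      intro r hr; nlinarith [hr.1, hr.2]
    have c2 : ∀ r ∈ Set.Icc (0:ℝ) (1/3), 1 + n*r ≠ 0 := by
      intro r hr; nlinarith [hr.1, hr.2, mul_nonneg hn0 hr.1]
    have c3 : ∀ r ∈ Set.Icc (0:ℝ) (1/3), 1 + 2*n*r + r^2 ≠ 0 := by
      intro r hr; nlinarith [hr.1, hr.2, mul_nonneg hn0 hr.1, sq_nonneg r]
    have c4 : ∀ r ∈ Set.Icc (0:ℝ) (1/3), 1 + r*(m+r) ≠ 0 := by
      intro r hr; nlinarith [hr.1, hr.2, mul_nonneg hr.1 (by linarith [hr.1] : (0:ℝ) ≤ m + r)]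
    have c5 : ∀ r ∈ Set.Icc (0:ℝ) (1/3), 1 + r*(q+r) ≠ 0 := by
      intro r hr; nlinarith [hr.1, hr.2, mul_nonneg hr.1 (by linarith [hr.1] : (0:ℝ) ≤ q + r)]
    apply ContinuousOn.sub _ continuousOn_const
    apply ContinuousOn.add
    apply ContinuousOn.add
    apply ContinuousOn.add
    apply ContinuousOn.sub
    · exact ContinuousOn.div continuousOn_const (by fun_prop) c1
    · exact ContinuousOn.div continuousOn_const (by fun_prop) c2
    · exact ContinuousOn.div (by fun_prop) (by fun_prop) c3
    · exact ContinuousOn.div (by fun_prop) (by fun_prop) c4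
    · exact ContinuousOn.div (by fun_prop) (by fun_prop) c5
  have hmem : (0:ℝ) ∈ Set.Ioo (x₂ (1/3)) (x₂ 0) := ⟨h13, h0pos⟩
  have := intermediate_value_Ioo' (by norm_num : (0:ℝ) ≤ 1/3) hcont hmem
  obtain ⟨r, hr, hr0⟩ := this
  exact ⟨r, hr, hr0⟩
end
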